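/- arXiv:2409.09757 — 2 statements merged into one kernel-verified Lean document; each statement's English description precedes it below -/
import Mathlib

section
/- Let M be a commutative monoid with zero and J a proper ideal of M. Then there exists an irreducible ideal L of M with J ⊆ L that is minimal among all irreducible ideals containing J (i.e., no irreducible ideal L' satisfies J ⊆ L' ⊊ L). -/
/-- An ideal of a commutative monoid: a nonempty subset `I` such that
`i ∈ I` and `m ∈ N` imply `i * m ∈ I`. -/
def IsIdeal {N : Type*} [CommMonoid N] (I : Set N) : Prop :=
  I.Nonempty ∧ ∀ i ∈ I, ∀ m : N, i * m ∈ I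

/-- The irreducibility condition on an ideal `L`: whenever `L = I ∩ J` for
ideals `I`, `J`, then `L = I` or `L = J`. -/
def IrredCond {N : Type*} [CommMonoid N] (L : Set N) : Prop :=
  ∀ I J : Set N, IsIdeal I → IsIdeal J → L = I ∩ J → L = I ∨ L = J

/-- The strong irreducibility condition on an ideal `L`: whenever
`I ∩ J ⊆ L` for ideals `I`, `J`, then `I ⊆ L` or `J ⊆ L`. -/
def StrIrredCond {N : Type*} [CommMonoid N] (L : Set N) : Prop :=
  ∀ I J : Set N, IsIdeal I → IsIdeal J → I ∩ J ⊆ L → I ⊆ L ∨ J ⊆ L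

/-- The radical of a subset `I`: all elements some positive power of which
lies in `I`. -/
def radicalSet {N : Type*} [CommMonoid N] (I : Set N) : Set N :=
  {m : N | ∃ k : ℕ, 0 < k ∧ m ^ k ∈ I}

/-- A primary ideal: a proper ideal `I` such that `x * y ∈ I` implies
`x ∈ I` or `y ^ k ∈ I` for some positive integer `k`. -/
def IsPrimaryIdeal {N : Type*} [CommMonoid N] (I : Set N) : Prop :=
  IsIdeal I ∧ I ≠ Set.univ ∧
    ∀ x y : N, x * y ∈ I → x ∈ I ∨ ∃ k : ℕ, 0 < k ∧ y ^ k ∈ I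

/-!
Zorn's lemma, applied downwards to the strongly irreducible ideals containing `J`, gives a
minimal one. Irreducible and strongly irreducible ideals coincide (write `L = (L ∪ I) ∩ (L ∪ J)`),
and a chain of strongly irreducible ideals has a strongly irreducible intersection: if
`a ∈ I` and `b ∈ J` escape two members of the chain, both escape the smaller member `K`,
although `I ∩ J ⊆ K` forces `I ⊆ K` or `J ⊆ K`.
-/

lemma IsIdeal.union {N : Type*} [CommMonoid N] {I J : Set N} (hI : IsIdeal I)
    (hJ : IsIdeal J) : IsIdeal (I ∪ J) := by
  refine ⟨hI.1.mono Set.subset_union_left, ?_⟩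
  rintro i (hi | hi) m
  · exact Or.inl (hI.2 i hi m)
  · exact Or.inr (hJ.2 i hi m)

lemma IsIdeal.zero_mem {N : Type*} [CommMonoidWithZero N] {I : Set N} (hI : IsIdeal I) :
    (0 : N) ∈ I := by
  obtain ⟨i, hi⟩ := hI.1
  simpa using hI.2 i hi 0

lemma isIdeal_sInter {N : Type*} [CommMonoidWithZero N] {c : Set (Set N)}
    (hc : ∀ I ∈ c, IsIdeal I) : IsIdeal (⋂₀ c) :=
  ⟨⟨0, fun I hI => (hc I hI).zero_mem⟩, fun i hi m I hI => (hc I hI).2 i (hi I hI) m⟩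

lemma IrredCond.strIrredCond {N : Type*} [CommMonoid N] {L : Set N} (hL : IsIdeal L)
    (h : IrredCond L) : StrIrredCond L := by
  intro I J hI hJ hIJ
  have hsplit : L = (L ∪ I) ∩ (L ∪ J) := by
    rw [← Set.union_inter_distrib_left, Set.union_eq_self_of_subset_right hIJ]
  rcases h _ _ (hL.union hI) (hL.union hJ) hsplit with h' | h'
  · exact Or.inl (h' ▸ Set.subset_union_right)
  · exact Or.inr (h' ▸ Set.subset_union_right)

lemma StrIrredCond.irredCond {N : Type*} [CommMonoid N] {L : Set N}
    (h : StrIrredCond L) : IrredCond L := by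
  intro I J hI hJ hIJ
  rcases h I J hI hJ hIJ.symm.le with h' | h'
  · exact Or.inl ((hIJ ▸ Set.inter_subset_left).antisymm h')
  · exact Or.inr ((hIJ ▸ Set.inter_subset_right).antisymm h')

lemma strIrredCond_sInter_of_isChain {N : Type*} [CommMonoid N] {c : Set (Set N)}
    (hchain : IsChain (· ⊆ ·) c) (hc : ∀ L ∈ c, StrIrredCond L) : StrIrredCond (⋂₀ c) := by
  intro I J hI hJ hIJ
  by_contra! hcon
  obtain ⟨a, haI, ha⟩ := Set.not_subset.mp hcon.1
  obtain ⟨b, hbJ, hb⟩ := Set.not_subset.mp hcon.2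
  simp only [Set.mem_sInter, not_forall] at ha hb
  obtain ⟨Ka, hKa, haK⟩ := ha
  obtain ⟨Kb, hKb, hbK⟩ := hb
  have hescape : ∀ K ∈ c, K ⊆ Ka → K ⊆ Kb → False := fun K hK hKa' hKb' =>
    (hc K hK I J hI hJ (hIJ.trans (Set.sInter_subset_of_mem hK))).elim
      (fun h => haK (hKa' (h haI))) (fun h => hbK (hKb' (h hbJ)))
  rcases hchain.total hKa hKb with hle | hle
  · exact hescape Ka hKa le_rfl hle
  · exact hescape Kb hKb hle le_rfl

theorem exists_minimal_irreducible_over_general {M : Type*} [CommMonoidWithZero M]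
    (J : Set M) :
    ∃ L : Set M, IsIdeal L ∧ IrredCond L ∧ J ⊆ L ∧
      ∀ L' : Set M, IsIdeal L' → IrredCond L' → J ⊆ L' → L' ⊆ L → L' = L := by
  set S : Set (Set M) := {L | IsIdeal L ∧ StrIrredCond L ∧ J ⊆ L}
  have huniv : Set.univ ∈ S :=
    ⟨⟨⟨1, trivial⟩, fun _ _ _ => trivial⟩, fun _ _ _ _ _ => Or.inl (Set.subset_univ _),
      Set.subset_univ _⟩
  have hchain : ∀ c ⊆ S, IsChain (· ⊆ ·) c → c.Nonempty → ∃ lb ∈ S, ∀ s ∈ c, lb ⊆ s :=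
    fun c hcS hc _ =>
      ⟨⋂₀ c, ⟨isIdeal_sInter fun I hI => (hcS hI).1,
        strIrredCond_sInter_of_isChain hc fun L hL => (hcS hL).2.1,
        Set.subset_sInter fun L hL => (hcS hL).2.2⟩, fun _ => Set.sInter_subset_of_mem⟩
  obtain ⟨L, -, ⟨hL, hLirr, hJL⟩, hmin⟩ := zorn_superset_nonempty S hchain Set.univ huniv
  refine ⟨L, hL, hLirr.irredCond, hJL, fun L' hL' hL'irr hJL' hL'L => ?_⟩
  exact hL'L.antisymm (hmin ⟨hL', hL'irr.strIrredCond hL', hJL'⟩ hL'L)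

/-- For each proper ideal `J` of a nontrivial commutative monoid with zero,
there is a minimal irreducible ideal over `J`. -/
theorem exists_minimal_irreducible_over {M : Type*} [CommMonoidWithZero M] [Nontrivial M]
    (J : Set M) (hJ : IsIdeal J) (hproper : J ≠ Set.univ) :
    ∃ L : Set M, IsIdeal L ∧ IrredCond L ∧ J ⊆ L ∧
      ∀ L' : Set M, IsIdeal L' → IrredCond L' → J ⊆ L' → L' ⊆ L → L' = L :=
  exists_minimal_irreducible_over_general J
end

section
/- Let M be a commutative monoid with zero, S a submonoid of M, and let M_S denote the localization of M at S. If I is a strongly irreducible primary ideal of M with I ∩ S = ∅, then the extension I_S = {mk(i,s) : i ∈ I, s ∈ S} is a proper ideal of M_S that is both strongly irreducible and primary. -/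
/-!
A primary ideal `I` disjoint from `S` is `S`-saturated (`s * m ∈ I` with `s ∈ S` forces `m ∈ I`,
since no power of `s` lies in `I`), so `mk a s ∈ I_S ↔ a ∈ I`, and primality passes to `I_S`
fraction by fraction. For strong irreducibility, `mk a s ∈ J` gives `mk a 1 ∈ J`, so an ideal `J`
of `M_S` lies in `I_S` as soon as its contraction `{m | mk m 1 ∈ J}` lies in `I`; contracting
`A ∩ B ⊆ I_S` to `M` reduces the claim to strong irreducibility of `I`.
-/

namespace Localization

variable {M : Type*} [CommMonoid M] (S : Submonoid M)

def extension (I : Set M) : Set (Localization S) :=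
  {x | ∃ i ∈ I, ∃ s : S, x = mk i s}

def contraction (J : Set (Localization S)) : Set M :=
  {m | mk m 1 ∈ J}

def IsSaturated (I : Set M) : Prop :=
  ∀ (s : S) (m : M), (s : M) * m ∈ I → m ∈ I

variable {S}

theorem isSaturated_of_inter_eq_empty {I : Set M} (hI : IsPrimaryIdeal I)
    (hdisj : I ∩ (S : Set M) = ∅) : IsSaturated S I := by
  intro s m h
  rcases hI.2.2 m s (mul_comm (s : M) m ▸ h) with hm | ⟨k, -, hsk⟩
  · exact hm
  · exact (Set.eq_empty_iff_forall_notMem.1 hdisj _ ⟨hsk, pow_mem s.2 k⟩).elim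

theorem mk_mul_mk_coe_one (a : M) (s : S) : mk a s * mk (s : M) 1 = mk a 1 := by
  rw [mk_mul, mul_comm s, ← mk_mul, mk_self, mul_one]

theorem mk_one_mem_of_mk_mem {J : Set (Localization S)} (hJ : IsIdeal J) {a : M} {s : S}
    (h : mk a s ∈ J) : mk a 1 ∈ J :=
  mk_mul_mk_coe_one a s ▸ hJ.2 _ h _

theorem mk_mem_extension_iff {I : Set M} (hI : IsIdeal I) (hsat : IsSaturated S I)
    (a : M) (s : S) : mk a s ∈ extension S I ↔ a ∈ I := by
  refine ⟨?_, fun ha => ⟨a, ha, s, rfl⟩⟩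
  rintro ⟨i, hi, t, hst⟩
  obtain ⟨c, hc⟩ := r_iff_exists.1 (mk_eq_mk_iff.1 hst)
  dsimp only at hc
  have hct : ((c * t : S) : M) * a = i * (c * s) := by
    rw [Submonoid.coe_mul, mul_assoc, hc]
    ac_rfl
  exact hsat (c * t) a (hct ▸ hI.2 i hi _)

theorem isIdeal_extension {I : Set M} (hI : IsIdeal I) : IsIdeal (extension S I) := by
  obtain ⟨⟨i, hi⟩, hmul⟩ := hI
  refine ⟨⟨mk i 1, i, hi, 1, rfl⟩, ?_⟩
  rintro _ ⟨j, hj, s, rfl⟩ x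
  induction x using induction_on with
  | H y => exact ⟨j * y.1, hmul j hj y.1, s * y.2, mk_mul ..⟩

theorem extension_ne_univ {I : Set M} (hI : IsIdeal I) (hsat : IsSaturated S I)
    (hne : I ≠ Set.univ) : extension S I ≠ Set.univ := by
  intro h
  have hone : (1 : M) ∈ I := (mk_mem_extension_iff hI hsat 1 1).1 (mk_one (S := S) ▸ h ▸ trivial)
  exact hne (Set.eq_univ_of_forall fun m => one_mul m ▸ hI.2 1 hone m)

theorem isIdeal_contraction {J : Set (Localization S)} (hJ : IsIdeal J) :
    IsIdeal (contraction S J) := by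
  obtain ⟨x, hx⟩ := hJ.1
  induction x using induction_on with
  | H y =>
    refine ⟨⟨y.1, mk_one_mem_of_mk_mem hJ hx⟩, fun m hm n => ?_⟩
    simpa only [contraction, Set.mem_ofPred_eq, mk_mul, mul_one] using hJ.2 _ hm (mk n 1)

theorem subset_extension_of_contraction_subset {I : Set M} {J : Set (Localization S)}
    (hJ : IsIdeal J) (h : contraction S J ⊆ I) : J ⊆ extension S I := by
  intro x hx
  induction x using induction_on with
  | H y => exact ⟨y.1, h (mk_one_mem_of_mk_mem hJ hx), y.2, rfl⟩

theorem strIrredCond_extension {I : Set M} (hI : IsIdeal I) (hsat : IsSaturated S I)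
    (hstr : StrIrredCond I) : StrIrredCond (extension S I) := by
  intro A B hA hB hAB
  have hcontr : contraction S A ∩ contraction S B ⊆ I := fun m hm =>
    (mk_mem_extension_iff hI hsat m 1).1 (hAB hm)
  exact (hstr _ _ (isIdeal_contraction hA) (isIdeal_contraction hB) hcontr).imp
    (subset_extension_of_contraction_subset hA) (subset_extension_of_contraction_subset hB)

theorem isPrimaryIdeal_extension {I : Set M} (hI : IsPrimaryIdeal I) (hsat : IsSaturated S I) :
    IsPrimaryIdeal (extension S I) := by
  obtain ⟨hIdeal, hne, hprim⟩ := hI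
  have hmem := mk_mem_extension_iff hIdeal hsat
  refine ⟨isIdeal_extension hIdeal, extension_ne_univ hIdeal hsat hne, fun x y hxy => ?_⟩
  induction x using induction_on with
  | H a =>
  induction y using induction_on with
  | H b =>
  rw [mk_mul, hmem] at hxy
  refine (hprim _ _ hxy).imp (hmem _ _).2 fun ⟨k, hk, hbk⟩ => ⟨k, hk, ?_⟩
  rw [mk_pow]
  exact (hmem _ _).2 hbk

end Localization

theorem extension_strongly_irreducible_primary_general {M : Type*} [CommMonoidWithZero M]
    (S : Submonoid M) (I : Set M) (hstr : StrIrredCond I)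
    (hprimary : IsPrimaryIdeal I) (hdisj : I ∩ (S : Set M) = ∅) :
    IsIdeal {x : Localization S | ∃ i ∈ I, ∃ s : S, x = Localization.mk i s} ∧
    {x : Localization S | ∃ i ∈ I, ∃ s : S, x = Localization.mk i s} ≠ Set.univ ∧
    StrIrredCond {x : Localization S | ∃ i ∈ I, ∃ s : S, x = Localization.mk i s} ∧
    IsPrimaryIdeal {x : Localization S | ∃ i ∈ I, ∃ s : S, x = Localization.mk i s} := by
  have hsat := Localization.isSaturated_of_inter_eq_empty hprimary hdisj
  have hext := Localization.isPrimaryIdeal_extension hprimary hsat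
  exact ⟨hext.1, hext.2.1, Localization.strIrredCond_extension hprimary.1 hsat hstr, hext⟩

/-- If `I` is a strongly irreducible primary ideal of `M` disjoint from `S`,
then its extension `I_S` is a proper ideal of the localization `M_S` that is
both strongly irreducible and primary. -/
theorem extension_strongly_irreducible_primary {M : Type*} [CommMonoidWithZero M]
    (S : Submonoid M) (I : Set M) (hI : IsIdeal I) (hstr : StrIrredCond I)
    (hprimary : IsPrimaryIdeal I) (hdisj : I ∩ (S : Set M) = ∅) :
    IsIdeal {x : Localization S | ∃ i ∈ I, ∃ s : S, x = Localization.mk i s} ∧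
    {x : Localization S | ∃ i ∈ I, ∃ s : S, x = Localization.mk i s} ≠ Set.univ ∧
    StrIrredCond {x : Localization S | ∃ i ∈ I, ∃ s : S, x = Localization.mk i s} ∧
    IsPrimaryIdeal {x : Localization S | ∃ i ∈ I, ∃ s : S, x = Localization.mk i s} :=
  extension_strongly_irreducible_primary_general S I hstr hprimary hdisj
end
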